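/- arXiv:2310.17067 — 2 statements merged into one kernel-verified Lean document; each statement's English description precedes it below -/
import Mathlib

section
/- Representation Formula: Let Ω ⊆ ℍ be an axially symmetric s-domain, let f : Ω → ℍ be slice regular, and let i ∈ 𝕊². Then for every q = x + I_q y ∈ Ω with x, y ∈ ℝ and I_q ∈ 𝕊², one has f(x + I_q y) = ½[ f(x + i y) + f(x − i y) ] + ½ I_q i [ f(x − i y) − f(x + i y) ]. -/
noncomputable section

open MeasureTheory Filter

notation "ℍ" => Quaternion ℝ

/-- The set of pure imaginary unit quaternions `𝕊²`. -/
def Sph2 (i : ℍ) : Prop := i.re = 0 ∧ ‖i‖ = 1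

/-- Ordered pairs of orthogonal pure imaginary unit quaternions (the set `T`). -/
def OrthPair (i j : ℍ) : Prop := Sph2 i ∧ Sph2 j ∧ (i * star j).re = 0

/-- The slice complex plane `ℂ(i) = {x + y i}`. -/
def CC (i : ℍ) : Set ℍ := {q | ∃ x y : ℝ, q = (x : ℍ) + y • i}

/-- Slice regularity of `f` on `Ω`: real differentiability together with the
Cauchy–Riemann condition `½(∂/∂x + i ∂/∂y) f = 0` on every slice. -/
def SliceRegularOn (f : ℍ → ℍ) (Ω : Set ℍ) : Prop :=
  ∀ ⦃i : ℍ⦄, Sph2 i → ∀ x y : ℝ, ((x : ℍ) + y • i) ∈ Ω →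
    DifferentiableAt ℝ f ((x : ℍ) + y • i) ∧
    fderiv ℝ f ((x : ℍ) + y • i) 1 + i * fderiv ℝ f ((x : ℍ) + y • i) i = 0

/-- Axially symmetric slice domain. -/
structure AxSymSDomain (Ω : Set ℍ) : Prop where
  isOpen : IsOpen Ω
  isConnected : IsConnected Ω
  real_nonempty : (Ω ∩ Set.range ((↑) : ℝ → ℍ)).Nonempty
  slice_connected : ∀ ⦃i : ℍ⦄, Sph2 i →
    IsConnected {p : ℝ × ℝ | ((p.1 : ℍ) + p.2 • i) ∈ Ω}
  axial : ∀ (x y : ℝ) ⦃i : ℍ⦄, Sph2 i → ((x : ℍ) + y • i) ∈ Ω →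
    ∀ ⦃j : ℍ⦄, Sph2 j → ((x : ℍ) + y • j) ∈ Ω

/-- The slice `Ω ∩ ℂ(i)` as a subset of `ℝ²`. -/
def sliceSet (Ω : Set ℍ) (i : ℍ) : Set (ℝ × ℝ) := {p | ((p.1 : ℍ) + p.2 • i) ∈ Ω}

/-- `‖f‖²_{A_i(Ω)} = ∫_{Ω ∩ ℂ(i)} ‖f‖² dσ_i`. -/
def bergmanNormSq (Ω : Set ℍ) (i : ℍ) (f : ℍ → ℍ) : ℝ :=
  ∫ p in sliceSet Ω i, ‖f ((p.1 : ℍ) + p.2 • i)‖ ^ 2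

/-- The slice regular Bergman norm `‖f‖_{A_i(Ω)}`. -/
def bergmanNorm (Ω : Set ℍ) (i : ℍ) (f : ℍ → ℍ) : ℝ :=
  Real.sqrt (bergmanNormSq Ω i f)

/-- Membership in the slice regular Bergman space `A_i(Ω)`. -/
def MemBergman (Ω : Set ℍ) (i : ℍ) (f : ℍ → ℍ) : Prop :=
  SliceRegularOn f Ω ∧
  IntegrableOn (fun p : ℝ × ℝ => ‖f ((p.1 : ℍ) + p.2 • i)‖ ^ 2) (sliceSet Ω i)

/-- The quaternionic Bergman inner product `⟨f,g⟩ = ∫ conj(f) g dσ_i`. -/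
def bergmanInner (Ω : Set ℍ) (i : ℍ) (f g : ℍ → ℍ) : ℍ :=
  ∫ p in sliceSet Ω i, star (f ((p.1 : ℍ) + p.2 • i)) * g ((p.1 : ℍ) + p.2 • i)

/-- The open unit ball `𝔹⁴ ⊆ ℍ`. -/
def B4 : Set ℍ := {q | ‖q‖ < 1}

/-- The open unit disk `D ⊆ ℝ²`. -/
def unitDisk : Set (ℝ × ℝ) := {p | p.1 ^ 2 + p.2 ^ 2 < 1}

/-- `‖f‖²_{A_i(𝔹⁴)} = ∫_D ‖f(x + yi)‖² dμ(x,y)`. -/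
def bergNormSqB (i : ℍ) (f : ℍ → ℍ) : ℝ :=
  ∫ p in unitDisk, ‖f ((p.1 : ℍ) + p.2 • i)‖ ^ 2

/-- The Bergman norm on `A_i(𝔹⁴)`. -/
def bergNormB (i : ℍ) (f : ℍ → ℍ) : ℝ := Real.sqrt (bergNormSqB i f)

/-- Membership in `A_i(𝔹⁴)`. -/
def MemBergB (i : ℍ) (f : ℍ → ℍ) : Prop :=
  SliceRegularOn f B4 ∧
  IntegrableOn (fun p : ℝ × ℝ => ‖f ((p.1 : ℍ) + p.2 • i)‖ ^ 2) unitDisk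

open Classical in
/-- `I_q`: the imaginary unit direction of `q` (an arbitrary fixed unit when `q` is real). -/
def Imu (q : ℍ) : ℍ := if q.im = 0 then ⟨0, 1, 0, 0⟩ else ‖q.im‖⁻¹ • q.im

/-- The extension operator `P_{k,·}`: for a slice function `g : ℝ² → ℍ` (representing
`x + y k ↦ g(x,y)`), `Pext k g (q) = ½[(1 + I_q k) g(x, −y) + (1 − I_q k) g(x, y)]`
where `q = x + I_q y`, `y = ‖im q‖ ≥ 0`. -/
def Pext (k : ℍ) (g : ℝ × ℝ → ℍ) (q : ℍ) : ℍ :=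
  (2⁻¹ : ℝ) • ((1 + Imu q * k) * g (q.re, -‖q.im‖) + (1 - Imu q * k) * g (q.re, ‖q.im‖))

/-- The slice function `x + y k ↦ a + b k + c l + d kl`. -/
def sliceFun (a b c d : ℝ × ℝ → ℝ) (k l : ℍ) (p : ℝ × ℝ) : ℍ :=
  (a p : ℍ) + b p • k + c p • l + d p • (k * l)

/-- `L²(D)` norm of a real function on the unit disk. -/
def L2D (a : ℝ × ℝ → ℝ) : ℝ := Real.sqrt (∫ p in unitDisk, a p ^ 2)

/-- Finiteness of the `L²(D)` norm. -/
def MemL2D (a : ℝ × ℝ → ℝ) : Prop := IntegrableOn (fun p => a p ^ 2) unitDisk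

/-- Harmonicity on the unit disk: `a` is `C²` and `∂²a/∂x² + ∂²a/∂y² = 0`. -/
def HarmonicOnDisk (a : ℝ × ℝ → ℝ) : Prop :=
  ContDiffOn ℝ 2 a unitDisk ∧ ∀ p ∈ unitDisk,
    fderiv ℝ (fun q => fderiv ℝ a q (1, 0)) p (1, 0)
      + fderiv ℝ (fun q => fderiv ℝ a q (0, 1)) p (0, 1) = 0

/-- `(a,b)` is a pair of conjugate harmonic functions on `D`:
both harmonic and satisfying the Cauchy–Riemann equations. -/
def ConjHarmPair (a b : ℝ × ℝ → ℝ) : Prop :=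
  HarmonicOnDisk a ∧ HarmonicOnDisk b ∧
  ∀ p ∈ unitDisk,
    fderiv ℝ a p (1, 0) = fderiv ℝ b p (0, 1) ∧
    fderiv ℝ a p (0, 1) = -fderiv ℝ b p (1, 0)

/-- `(a,b) ∈ HL²(D)`. -/
def HLpair (a b : ℝ × ℝ → ℝ) : Prop := ConjHarmPair a b ∧ MemL2D a ∧ MemL2D b

/-- Raw data of an element of `HL(D)`: a 2×2 matrix `(a b; c d)` of real functions
on the disk together with a pair `(k,l)` of quaternions. -/
structure HLElem where
  a : ℝ × ℝ → ℝ
  b : ℝ × ℝ → ℝ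
  c : ℝ × ℝ → ℝ
  d : ℝ × ℝ → ℝ
  k : ℍ
  l : ℍ

/-- Membership in `HL(D)`: `(a,b),(c,d) ∈ HL²(D)` and `(k,l) ∈ T`. -/
def HLElem.mem (A : HLElem) : Prop := HLpair A.a A.b ∧ HLpair A.c A.d ∧ OrthPair A.k A.l

/-- The bundle projection `P_{𝔹⁴}((a b; c d),(k,l)) = P_{k,l}[a + bk + cl + dkl]`. -/
def HLElem.proj (A : HLElem) : ℍ → ℍ := Pext A.k (sliceFun A.a A.b A.c A.d A.k A.l)

/-- The metric of `HL(D)`. -/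
def HLdist (A B : HLElem) : ℝ :=
  L2D (A.a - B.a) + L2D (A.b - B.b) + L2D (A.c - B.c) + L2D (A.d - B.d)
    + Real.sqrt (‖A.k - B.k‖ ^ 2 + ‖A.l - B.l‖ ^ 2)

/-- `Q_{k,l}[f] : (x,y) ↦ f(x + y k)`, the restriction of `f` to the slice `ℂ(k)`. -/
def Qsl (f : ℍ → ℍ) (k : ℍ) (p : ℝ × ℝ) : ℍ := f ((p.1 : ℍ) + p.2 • k)

/-- `D₁[f,k,l] = (Q[f] + conj(Q[f]))/2 = Re (Q[f])`. -/
def Dc1 (f : ℍ → ℍ) (k _l : ℍ) (p : ℝ × ℝ) : ℝ := (Qsl f k p).re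

/-- `D₂[f,k,l] = −(Q[f]·k + conj(Q[f]·k))/2 = −Re (Q[f]·k)`. -/
def Dc2 (f : ℍ → ℍ) (k _l : ℍ) (p : ℝ × ℝ) : ℝ := -(Qsl f k p * k).re

/-- `D₃[f,k,l] = −(Q[f]·l + conj(Q[f]·l))/2 = −Re (Q[f]·l)`. -/
def Dc3 (f : ℍ → ℍ) (k l : ℍ) (p : ℝ × ℝ) : ℝ := -(Qsl f k p * l).re

/-- `D₄[f,k,l] = (Q[f]·lk + conj(Q[f]·lk))/2 = Re (Q[f]·(lk))`. -/
def Dc4 (f : ℍ → ℍ) (k l : ℍ) (p : ℝ × ℝ) : ℝ := (Qsl f k p * (l * k)).re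

/-- The section map `S_{k,l}[f] = ((D₁ D₂; D₃ D₄), (k,l))`. -/
def Smap (f : ℍ → ℍ) (k l : ℍ) : HLElem :=
  ⟨Dc1 f k l, Dc2 f k l, Dc3 f k l, Dc4 f k l, k, l⟩

/-- The metric `ρ_i` on `A_i(𝔹⁴) × T`. -/
def rhoA (i : ℍ) (f : ℍ → ℍ) (k l : ℍ) (g : ℍ → ℍ) (m n : ℍ) : ℝ :=
  bergNormB i (f - g) + Real.sqrt (‖k - m‖ ^ 2 + ‖l - n‖ ^ 2)

/-!
Writing `x - y i = x + y (-i)`, consider on `ℂ` the function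
`g z = f(z_I) - ½(1 - I i) f(z_i) - ½(1 - I (-i)) f(z_{-i})`, where `z_J = Re z + (Im z) J`.
Each term is holomorphic for the complex structure on `ℍ` given by left multiplication by `I`:
`f(z_J)` is so for left multiplication by `J` (Cauchy–Riemann on the slice `ℂ(J)`), and the
coefficient `½(1 - I J)` intertwines the two, `½(1 - I J) J = I ½(1 - I J)`.
Since `g` vanishes on the real axis and the slice `Ω ∩ ℂ(I)` is connected and meets it,
the identity principle gives `g = 0` there.
-/

open Topology

namespace Sph2

variable {J : ℍ}

theorem star_eq (hJ : Sph2 J) : star J = -J := Quaternion.star_eq_neg.mpr hJ.1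

theorem normSq_eq_one (hJ : Sph2 J) : Quaternion.normSq J = 1 := by
  rw [Quaternion.normSq_eq_norm_mul_self, hJ.2, one_mul]

theorem mul_self (hJ : Sph2 J) : J * J = -1 := by
  have h := Quaternion.self_mul_star J
  rw [hJ.star_eq, hJ.normSq_eq_one, mul_neg, Quaternion.coe_one] at h
  exact neg_eq_iff_eq_neg.mp h

theorem neg (hJ : Sph2 J) : Sph2 (-J) := ⟨by simp [hJ.1], by simp [hJ.2]⟩

theorem norm_ofReal_add_smul (hJ : Sph2 J) (x y : ℝ) :
    ‖(x : ℍ) + y • J‖ = √(x ^ 2 + y ^ 2) := by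
  have hsq : Quaternion.normSq ((x : ℍ) + y • J) = x ^ 2 + y ^ 2 := by
    rw [Quaternion.normSq_add, Quaternion.normSq_coe, Quaternion.normSq_smul, hJ.normSq_eq_one,
      Quaternion.star_smul, hJ.star_eq, Quaternion.coe_mul_eq_smul, smul_smul]
    simp [hJ.1]
  rw [← hsq, Quaternion.normSq_eq_norm_mul_self, Real.sqrt_mul_self (norm_nonneg _)]

end Sph2

def sliceEmb (J : ℍ) : ℂ →L[ℝ] ℍ :=
  Complex.reCLM.smulRight 1 + Complex.imCLM.smulRight J

@[simp]
theorem sliceEmb_apply (J : ℍ) (z : ℂ) : sliceEmb J z = (z.re : ℍ) + z.im • J := by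
  simp [sliceEmb, ← Quaternion.coe_mul_eq_smul]

def SliceHolomorphicAt (J : ℍ) (g : ℂ → ℍ) (z : ℂ) : Prop :=
  ∃ D : ℂ →L[ℝ] ℍ, HasFDerivAt g D z ∧ D Complex.I = J * D 1

namespace SliceHolomorphicAt

variable {J K : ℍ} {g h : ℂ → ℍ} {z : ℂ}

theorem sub (hg : SliceHolomorphicAt J g z) (hh : SliceHolomorphicAt J h z) :
    SliceHolomorphicAt J (fun w => g w - h w) z := by
  obtain ⟨D, hD, hDI⟩ := hg
  obtain ⟨E, hE, hEI⟩ := hh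
  exact ⟨D - E, hD.sub hE, by simp [hDI, hEI, mul_sub]⟩

theorem const_mul (hg : SliceHolomorphicAt K g z) {a : ℍ} (ha : a * K = J * a) :
    SliceHolomorphicAt J (fun w => a * g w) z := by
  obtain ⟨D, hD, hDI⟩ := hg
  refine ⟨a • D, hD.const_mul a, ?_⟩
  simp only [smul_apply, smul_eq_mul, hDI, ← mul_assoc, ha]

end SliceHolomorphicAt

theorem SliceRegularOn.sliceHolomorphicAt {f : ℍ → ℍ} {Ω : Set ℍ}
    (hf : SliceRegularOn f Ω) {J : ℍ} (hJ : Sph2 J) {z : ℂ} (hz : sliceEmb J z ∈ Ω) :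
    SliceHolomorphicAt J (fun w => f (sliceEmb J w)) z := by
  rw [sliceEmb_apply] at hz
  obtain ⟨hdiff, hCR⟩ := hf hJ z.re z.im hz
  set A := fderiv ℝ f ((z.re : ℍ) + z.im • J)
  refine ⟨A.comp (sliceEmb J), ?_, ?_⟩
  · refine HasFDerivAt.comp z ?_ (sliceEmb J).hasFDerivAt
    rw [sliceEmb_apply]
    exact hdiff.hasFDerivAt
  · have h := congrArg (J * ·) hCR
    simp only [mul_add, ← mul_assoc, hJ.mul_self, neg_one_mul, mul_zero] at h
    rw [add_neg_eq_zero] at h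
    simpa using h.symm

def sliceAlgHom {J : ℍ} (hJ : Sph2 J) : ℂ →ₐ[ℝ] ℍ := Complex.lift ⟨J, hJ.mul_self⟩

theorem sliceAlgHom_apply {J : ℍ} (hJ : Sph2 J) (z : ℂ) : sliceAlgHom hJ z = sliceEmb J z := by
  simp [sliceAlgHom, Complex.lift_apply, Quaternion.algebraMap_def]

theorem eqOn_zero_of_sliceHolomorphicAt_of_frequently_eq_zero {J : ℍ} (hJ : Sph2 J)
    {g : ℂ → ℍ} {S : Set ℂ} (hS : IsOpen S) (hSc : IsPreconnected S)
    (hg : ∀ z ∈ S, SliceHolomorphicAt J g z) {z₀ : ℂ} (hz₀ : z₀ ∈ S)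
    (hfreq : ∃ᶠ z in 𝓝[≠] z₀, g z = 0) : Set.EqOn g 0 S := by
  -- make `ℍ` a normed `ℂ`-space through left multiplication by `ℂ(J)`
  let _ : Module ℂ ℍ := Module.compHom ℍ (sliceAlgHom hJ).toRingHom
  have smul_def (w : ℂ) (q : ℍ) : w • q = sliceEmb J w * q := by
    rw [← sliceAlgHom_apply hJ]; rfl
  have _ : IsScalarTower ℝ ℂ ℍ := ⟨fun r w q => by
    simp only [smul_def, map_smul, smul_mul_assoc]⟩
  let _ : NormedSpace ℂ ℍ := ⟨fun w q => by
    rw [smul_def, norm_mul, sliceEmb_apply, hJ.norm_ofReal_add_smul,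
      Complex.norm_eq_sqrt_sq_add_sq]⟩
  have hdiff : DifferentiableOn ℂ g S := by
    intro z hz
    obtain ⟨D, hD, hDI⟩ := hg z hz
    refine (hasFDerivAt_of_restrictScalars ℝ hD
      (f' := ContinuousLinearMap.toSpanSingleton ℂ (D 1)) ?_).differentiableAt
      |>.differentiableWithinAt
    refine ContinuousLinearMap.ext fun w => ?_
    have hDw : D w = w.re • D 1 + w.im • D Complex.I := by
      rw [← map_smul, ← map_smul, ← map_add]
      congr 1
      apply Complex.ext <;> simp
    change w • D 1 = D w
    rw [smul_def, sliceEmb_apply, hDw, hDI, add_mul, Quaternion.coe_mul_eq_smul, smul_mul_assoc]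
  exact (hdiff.analyticOnNhd hS).eqOn_zero_of_preconnected_of_frequently_eq_zero hSc hz₀ hfreq

theorem AxSymSDomain.isPreconnected_sliceEmb_preimage {Ω : Set ℍ} (hΩ : AxSymSDomain Ω)
    {J : ℍ} (hJ : Sph2 J) : IsPreconnected {z : ℂ | sliceEmb J z ∈ Ω} := by
  have h : {z : ℂ | sliceEmb J z ∈ Ω} =
      Complex.equivRealProdCLM.toHomeomorph ⁻¹' sliceSet Ω J := by
    ext z
    simp [sliceSet]
  rw [h, Homeomorph.isPreconnected_preimage]
  exact (hΩ.slice_connected hJ).isPreconnected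

theorem frequently_nhdsNE_ofReal {p : ℂ → Prop} (hp : ∀ t : ℝ, p t) (x : ℝ) :
    ∃ᶠ z in 𝓝[≠] (x : ℂ), p z := by
  have h : Filter.Tendsto ((↑) : ℝ → ℂ) (𝓝[≠] x) (𝓝[≠] (x : ℂ)) :=
    Complex.continuous_ofReal.continuousWithinAt.tendsto_nhdsWithin
      fun t ht => Complex.ofReal_injective.ne ht
  exact h.frequently (Filter.Frequently.of_forall hp)

theorem AxSymSDomain.eq_zero_of_sliceHolomorphicAt {Ω : Set ℍ} (hΩ : AxSymSDomain Ω)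
    {J : ℍ} (hJ : Sph2 J) {g : ℂ → ℍ}
    (hg : ∀ z, sliceEmb J z ∈ Ω → SliceHolomorphicAt J g z) (hreal : ∀ t : ℝ, g t = 0)
    {z : ℂ} (hz : sliceEmb J z ∈ Ω) : g z = 0 := by
  obtain ⟨_, hx₀, x₀, rfl⟩ := hΩ.real_nonempty
  have hx₀ : sliceEmb J x₀ ∈ Ω := by simpa using hx₀
  exact eqOn_zero_of_sliceHolomorphicAt_of_frequently_eq_zero hJ
    (hΩ.isOpen.preimage (sliceEmb J).continuous) (hΩ.isPreconnected_sliceEmb_preimage hJ) hg hx₀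
    (frequently_nhdsNE_ofReal hreal x₀) hz

theorem Sph2.half_one_sub_mul_mul_comm {I J : ℍ} (hI : Sph2 I) (hJ : Sph2 J) :
    (2⁻¹ : ℝ) • (1 - I * J) * J = I * ((2⁻¹ : ℝ) • (1 - I * J)) := by
  rw [smul_mul_assoc, mul_smul_comm, sub_mul, mul_sub, mul_assoc, hJ.mul_self, ← mul_assoc,
    hI.mul_self]
  noncomm_ring

theorem half_one_sub_mul_add_half_one_sub_mul_neg (I J : ℍ) :
    (2⁻¹ : ℝ) • (1 - I * J) + (2⁻¹ : ℝ) • (1 - I * -J) = 1 := by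
  rw [← smul_add, mul_neg, sub_neg_eq_add, sub_add_add_cancel, ← two_smul ℝ, smul_smul,
    inv_mul_cancel₀ two_ne_zero, one_smul]

/-- **Representation Formula.** -/
theorem representation_formula (Ω : Set ℍ) (hΩ : AxSymSDomain Ω)
    (f : ℍ → ℍ) (hf : SliceRegularOn f Ω)
    (i : ℍ) (hi : Sph2 i)
    (x y : ℝ) (I : ℍ) (hI : Sph2 I) (hq : ((x : ℍ) + y • I) ∈ Ω) :
    f ((x : ℍ) + y • I)
      = (2⁻¹ : ℝ) • (f ((x : ℍ) + y • i) + f ((x : ℍ) - y • i))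
        + (2⁻¹ : ℝ) • (I * i * (f ((x : ℍ) - y • i) - f ((x : ℍ) + y • i))) := by
  set a : ℍ → ℍ := fun J => (2⁻¹ : ℝ) • (1 - I * J)
  set g : ℂ → ℍ := fun z =>
    f (sliceEmb I z) - a i * f (sliceEmb i z) - a (-i) * f (sliceEmb (-i) z)
  have h : g ⟨x, y⟩ = 0 := by
    refine hΩ.eq_zero_of_sliceHolomorphicAt hI (fun w hw => ?_) (fun t => ?_) (by simpa using hq)
    · have hmem {J : ℍ} (hJ : Sph2 J) : sliceEmb J w ∈ Ω := by
        simpa using hΩ.axial _ _ hI (by simpa using hw) hJ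
      exact ((hf.sliceHolomorphicAt hI hw).sub ((hf.sliceHolomorphicAt hi (hmem hi)).const_mul
        (hI.half_one_sub_mul_mul_comm hi))).sub ((hf.sliceHolomorphicAt hi.neg
          (hmem hi.neg)).const_mul (hI.half_one_sub_mul_mul_comm hi.neg))
    · simp only [g, sliceEmb_apply, Complex.ofReal_re, Complex.ofReal_im, zero_smul, add_zero]
      rw [sub_sub, ← add_mul, half_one_sub_mul_add_half_one_sub_mul_neg, one_mul, sub_self]
  simp only [g, a, sliceEmb_apply, smul_neg, ← sub_eq_add_neg] at h
  rw [sub_sub, sub_eq_zero] at h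
  rw [h]
  simp only [smul_mul_assoc, sub_mul, one_mul, mul_sub, smul_sub, smul_add, mul_assoc, mul_neg,
    neg_mul, smul_neg]
  abel
end
end

section
/- Lipschitz-type estimate for the bundle projection: Let ((a b; c d), (i,j)) and ((r s; t u), (k,l)) be elements of HL(D). Then ‖ P_{i,j}[a + bi + cj + dij] − P_{k,l}[r + sk + tl + ukl] ‖_{A_i(𝔹⁴)} ≤ 8 ( 1 + ‖r‖_{L²(D)} + ‖s‖_{L²(D)} + ‖t‖_{L²(D)} + ‖u‖_{L²(D)} ) · d( ((a b; c d),(i,j)), ((r s; t u),(k,l)) ), where d is the metric of HL(D). -/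
noncomputable section

open MeasureTheory Filter

/-!
Restrict everything to the slice `ℂ(i)`, `i = A.k`. There `P_{i,j}[g]` restricts to `g`, while
`P_{k,l}[g](x + y i) = g(x,y) + ½ i (k - i) (g(x,-y) - g(x,y))`. The difference of the two
projections is therefore `g_A - g_B` minus a correction of size
`≤ ½ ‖k - i‖ (|g_B(x,-y)| + |g_B(x,y)|)`.
Expanding `g_A`, `g_B` in the unit bases `1, i, j, ij` and `1, k, l, kl`, Minkowski's inequality in
`L²(D)` and the invariance of `D` under `(x,y) ↦ (x,-y)` bound the `A_i`-norm by
`Σ ‖A_m - B_m‖ + 2 (‖i - k‖ + ‖j - l‖) Σ ‖B_m‖`, well within the stated constant.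
-/

open ENNReal

section LpBounds

variable {α E ι : Type*} [MeasurableSpace α] {μ : Measure α}
  [NormedAddCommGroup E] {q : ℝ≥0∞}

lemma sqrt_integral_norm_sq_eq_toReal_eLpNorm {f : α → E} (hf : AEStronglyMeasurable f μ) :
    √(∫ x, ‖f x‖ ^ 2 ∂μ) = (eLpNorm f 2 μ).toReal := by
  by_cases h : MemLp f 2 μ
  · rw [h.eLpNorm_eq_integral_rpow_norm two_ne_zero ofNat_ne_top,
      toReal_ofReal (by positivity), Real.sqrt_eq_rpow]
    norm_num
  · have hf2 : ¬ Integrable (fun x => ‖f x‖ ^ 2) μ := (memLp_two_iff_integrable_sq_norm hf).not.1 h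
    have htop : eLpNorm f 2 μ = ∞ := not_lt_top_iff.1 fun hlt => h ⟨hf, hlt⟩
    rw [integral_undef hf2, htop]
    simp

variable [NormedSpace ℝ E]

lemma eLpNorm_smul_const (f : α → ℝ) (e : E) :
    eLpNorm (fun x => f x • e) q μ = eLpNorm f q μ * ‖e‖ₑ := by
  calc eLpNorm (fun x => f x • e) q μ = eLpNorm (‖e‖ • f) q μ :=
        eLpNorm_congr_norm_ae (ae_of_all _ fun x => by simp [norm_smul, mul_comm])
    _ = eLpNorm f q μ * ‖e‖ₑ := by rw [eLpNorm_const_smul, enorm_norm, mul_comm]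

lemma eLpNorm_sum_smul_le (s : Finset ι) {f : ι → α → ℝ} (e : ι → E)
    (hf : ∀ m ∈ s, AEStronglyMeasurable (f m) μ) (hq : 1 ≤ q) :
    eLpNorm (fun x => ∑ m ∈ s, f m x • e m) q μ ≤ ∑ m ∈ s, eLpNorm (f m) q μ * ‖e m‖ₑ := by
  have h := eLpNorm_sum_le (f := fun m x => f m x • e m) (fun m hm => (hf m hm).smul_const (e m)) hq
  simpa only [Finset.sum_fn, eLpNorm_smul_const] using h

lemma eLpNorm_sum_smul_sub_sum_smul_le (s : Finset ι) {f g : ι → α → ℝ} (e e' : ι → E)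
    (hf : ∀ m ∈ s, AEStronglyMeasurable (f m) μ) (hg : ∀ m ∈ s, AEStronglyMeasurable (g m) μ)
    (hq : 1 ≤ q) :
    eLpNorm (fun x => ∑ m ∈ s, f m x • e m - ∑ m ∈ s, g m x • e' m) q μ
      ≤ ∑ m ∈ s, eLpNorm (f m - g m) q μ * ‖e m‖ₑ + ∑ m ∈ s, eLpNorm (g m) q μ * ‖e m - e' m‖ₑ := by
  have hsplit : (fun x => ∑ m ∈ s, f m x • e m - ∑ m ∈ s, g m x • e' m)
      = (fun x => ∑ m ∈ s, (f m - g m) x • e m) + fun x => ∑ m ∈ s, g m x • (e m - e' m) := by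
    funext x
    simp only [Pi.add_apply, Pi.sub_apply, sub_smul, smul_sub, Finset.sum_sub_distrib]
    abel
  rw [hsplit]
  refine (eLpNorm_add_le ?_ ?_ hq).trans (add_le_add ?_ ?_)
  · exact Finset.aestronglyMeasurable_fun_sum s fun m hm => ((hf m hm).sub (hg m hm)).smul_const _
  · exact Finset.aestronglyMeasurable_fun_sum s fun m hm => (hg m hm).smul_const _
  · exact eLpNorm_sum_smul_le s e (fun m hm => (hf m hm).sub (hg m hm)) hq
  · exact eLpNorm_sum_smul_le s _ hg hq

end LpBounds

namespace Sph2

variable {i : ℍ} (hi : Sph2 i)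
include hi

lemma ne_zero : i ≠ 0 := by
  rintro rfl
  simpa using hi.2

lemma mul_self_s10 : i * i = -1 := by
  have h : i * star i = 1 := by
    rw [Quaternion.self_mul_star, Quaternion.normSq_eq_norm_mul_self, hi.2, mul_one,
      Quaternion.coe_one]
  rwa [Quaternion.star_eq_neg.2 hi.1, mul_neg, neg_eq_iff_eq_neg] at h

lemma re_coe_add_smul (x y : ℝ) : ((x : ℍ) + y • i).re = x := by
  simp [hi.1]

lemma norm_im_coe_add_smul (x y : ℝ) : ‖((x : ℍ) + y • i).im‖ = |y| := by
  have h : ((x : ℍ) + y • i).im = y • i := by ext <;> simp [hi.1]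
  rw [h, norm_smul, hi.2, mul_one, Real.norm_eq_abs]

lemma Imu_coe_add_smul {y : ℝ} (hy : y ≠ 0) (x : ℝ) :
    Imu ((x : ℍ) + y • i) = (|y|⁻¹ * y) • i := by
  have h : ((x : ℍ) + y • i).im = y • i := by ext <;> simp [hi.1]
  simp only [Imu, h, smul_ne_zero hy hi.ne_zero, ↓reduceIte, norm_smul, hi.2, mul_one,
    Real.norm_eq_abs, smul_smul]

end Sph2

lemma Pext_coe_add_smul (g : ℝ × ℝ → ℍ) {i : ℍ} (hi : Sph2 i) (k : ℍ) (x y : ℝ) :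
    Pext k g ((x : ℍ) + y • i)
      = g (x, y) + (2⁻¹ : ℝ) • (i * (k - i) * (g (x, -y) - g (x, y))) := by
  have hik : i * (k - i) = 1 + i * k := by rw [mul_sub, hi.mul_self_s10, sub_neg_eq_add, add_comm]
  rw [Pext, hi.re_coe_add_smul, hi.norm_im_coe_add_smul, hik]
  rcases lt_trichotomy y 0 with hy | rfl | hy
  · rw [hi.Imu_coe_add_smul hy.ne, abs_of_neg hy, neg_neg, inv_neg, neg_mul,
      inv_mul_cancel₀ hy.ne, neg_one_smul]
    simp only [neg_mul, add_mul, sub_mul, one_mul, sub_neg_eq_add, ← sub_eq_add_neg, mul_sub]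
    module
  · simp only [abs_zero, neg_zero, sub_self, mul_zero, smul_zero, add_zero]
    simp only [add_mul, sub_mul, one_mul]
    module
  · rw [hi.Imu_coe_add_smul hy.ne', abs_of_pos hy, inv_mul_cancel₀ hy.ne', one_smul]
    simp only [add_mul, sub_mul, one_mul, mul_sub]
    module

def sliceBasis (k l : ℍ) : Fin 4 → ℍ := ![1, k, l, k * l]

def HLElem.entry (A : HLElem) : Fin 4 → ℝ × ℝ → ℝ := ![A.a, A.b, A.c, A.d]

def HLElem.slice (A : HLElem) : ℝ × ℝ → ℍ := sliceFun A.a A.b A.c A.d A.k A.l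

lemma HLElem.slice_eq_sum (A : HLElem) :
    A.slice = fun p => ∑ m, A.entry m p • sliceBasis A.k A.l m := by
  funext p
  simp [HLElem.slice, sliceFun, HLElem.entry, sliceBasis, Fin.sum_univ_four,
    ← Quaternion.coe_mul_eq_smul]

lemma norm_sliceBasis {k l : ℍ} (hk : ‖k‖ = 1) (hl : ‖l‖ = 1) (m : Fin 4) :
    ‖sliceBasis k l m‖ = 1 := by
  fin_cases m <;> simp [sliceBasis, hk, hl]

lemma norm_sliceBasis_sub_le {i j k l : ℍ} (hj : ‖j‖ = 1) (hk : ‖k‖ = 1) (m : Fin 4) :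
    ‖sliceBasis i j m - sliceBasis k l m‖ ≤ ‖i - k‖ + ‖j - l‖ := by
  have hij : i * j - k * l = (i - k) * j + k * (j - l) := by noncomm_ring
  fin_cases m
  · simp [sliceBasis]; positivity
  · simp [sliceBasis]
  · simp [sliceBasis]
  · simpa [sliceBasis, hij, hj, hk] using norm_add_le ((i - k) * j) (k * (j - l))

local notation "μD" => volume.restrict unitDisk

lemma measurableSet_unitDisk : MeasurableSet unitDisk :=
  (isOpen_lt (by fun_prop) continuous_const).measurableSet

def reflectY (p : ℝ × ℝ) : ℝ × ℝ := (p.1, -p.2)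

lemma measurePreserving_reflectY : MeasurePreserving reflectY μD μD := by
  have hemb : MeasurableEmbedding reflectY :=
    ((MeasurableEquiv.refl ℝ).prodCongr (MeasurableEquiv.neg ℝ)).measurableEmbedding
  have hvol : MeasurePreserving reflectY := by
    rw [Measure.volume_eq_prod]
    exact (MeasurePreserving.id volume).prod (Measure.measurePreserving_neg volume)
  have hpre : reflectY ⁻¹' unitDisk = unitDisk := by ext p; simp [unitDisk, reflectY]
  simpa only [hpre] using hvol.restrict_preimage_emb hemb unitDisk

lemma L2D_nonneg (a : ℝ × ℝ → ℝ) : 0 ≤ L2D a := Real.sqrt_nonneg _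

lemma ofReal_L2D {a : ℝ × ℝ → ℝ} (ha : MemLp a 2 μD) :
    ENNReal.ofReal (L2D a) = eLpNorm a 2 μD := by
  rw [← ofReal_toReal ha.eLpNorm_ne_top, ← sqrt_integral_norm_sq_eq_toReal_eLpNorm ha.1]
  simp only [L2D, Real.norm_eq_abs, sq_abs]

lemma sum_eLpNorm_eq_ofReal_sum_L2D {ι : Type*} (s : Finset ι) {f : ι → ℝ × ℝ → ℝ}
    (hf : ∀ m ∈ s, MemLp (f m) 2 μD) :
    ∑ m ∈ s, eLpNorm (f m) 2 μD = ENNReal.ofReal (∑ m ∈ s, L2D (f m)) := by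
  rw [ofReal_sum_of_nonneg fun m _ => L2D_nonneg (f m)]
  exact Finset.sum_congr rfl fun m hm => (ofReal_L2D (hf m hm)).symm

lemma HarmonicOnDisk.memLp {a : ℝ × ℝ → ℝ} (h : HarmonicOnDisk a) (ha : MemL2D a) :
    MemLp a 2 μD :=
  (memLp_two_iff_integrable_sq (h.1.continuousOn.aestronglyMeasurable measurableSet_unitDisk)).2 ha

lemma HLElem.mem.memLp_entry {A : HLElem} (hA : A.mem) (m : Fin 4) : MemLp (A.entry m) 2 μD := by
  obtain ⟨⟨⟨ha, hb, -⟩, ha2, hb2⟩, ⟨⟨hc, hd, -⟩, hc2, hd2⟩, -⟩ := hA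
  fin_cases m
  exacts [ha.memLp ha2, hb.memLp hb2, hc.memLp hc2, hd.memLp hd2]

namespace HLElem

variable {A B : HLElem}

lemma proj_sub_proj_coe_add_smul (hAk : Sph2 A.k) :
    (fun p : ℝ × ℝ => (A.proj - B.proj) ((p.1 : ℍ) + p.2 • A.k))
      = A.slice - B.slice - ((2⁻¹ : ℝ) • (A.k * (B.k - A.k))) • (B.slice ∘ reflectY - B.slice) := by
  funext p
  simp only [Pi.sub_apply, proj, Pext_coe_add_smul _ hAk, sub_self, mul_zero, zero_mul, smul_zero,
    add_zero, Pi.smul_apply, Function.comp_apply, smul_eq_mul, smul_mul_assoc, sub_add_eq_sub_sub]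
  rfl

lemma aestronglyMeasurable_slice (hA : ∀ m, AEStronglyMeasurable (A.entry m) μD) :
    AEStronglyMeasurable A.slice μD := by
  rw [slice_eq_sum]
  exact Finset.aestronglyMeasurable_fun_sum _ fun m _ => (hA m).smul_const _

lemma eLpNorm_slice_le (hk : ‖A.k‖ = 1) (hl : ‖A.l‖ = 1)
    (hA : ∀ m, AEStronglyMeasurable (A.entry m) μD) :
    eLpNorm A.slice 2 μD ≤ ∑ m, eLpNorm (A.entry m) 2 μD := by
  rw [slice_eq_sum]
  refine (eLpNorm_sum_smul_le _ _ (fun m _ => hA m) one_le_two).trans_eq ?_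
  simp only [← ofReal_norm, norm_sliceBasis hk hl, ofReal_one, mul_one]

lemma eLpNorm_slice_sub_slice_le (hAl : ‖A.l‖ = 1) (hAk : ‖A.k‖ = 1) (hBk : ‖B.k‖ = 1)
    (hA : ∀ m, AEStronglyMeasurable (A.entry m) μD)
    (hB : ∀ m, AEStronglyMeasurable (B.entry m) μD) :
    eLpNorm (A.slice - B.slice) 2 μD
      ≤ ∑ m, eLpNorm (A.entry m - B.entry m) 2 μD
        + ENNReal.ofReal (‖A.k - B.k‖ + ‖A.l - B.l‖) * ∑ m, eLpNorm (B.entry m) 2 μD := by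
  rw [slice_eq_sum, slice_eq_sum, Finset.mul_sum]
  refine (eLpNorm_sum_smul_sub_sum_smul_le _ _ _ (fun m _ => hA m) (fun m _ => hB m)
    one_le_two).trans (add_le_add (le_of_eq ?_) (Finset.sum_le_sum fun m _ => ?_))
  · simp only [← ofReal_norm, norm_sliceBasis hAk hAl, ofReal_one, mul_one]
  · rw [mul_comm, ← ofReal_norm]
    gcongr
    exact norm_sliceBasis_sub_le hAl hBk m

lemma aestronglyMeasurable_proj_sub_proj (hAk : Sph2 A.k)
    (hA : ∀ m, AEStronglyMeasurable (A.entry m) μD)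
    (hB : ∀ m, AEStronglyMeasurable (B.entry m) μD) :
    AEStronglyMeasurable (fun p : ℝ × ℝ => (A.proj - B.proj) ((p.1 : ℍ) + p.2 • A.k)) μD := by
  have hAs := aestronglyMeasurable_slice hA
  have hBs := aestronglyMeasurable_slice hB
  rw [proj_sub_proj_coe_add_smul hAk]
  have hBr := hBs.comp_measurePreserving measurePreserving_reflectY
  exact (hAs.sub hBs).sub ((hBr.sub hBs).const_smul _)

lemma eLpNorm_proj_sub_proj_le (hAk : Sph2 A.k) (hAl : ‖A.l‖ = 1) (hBk : ‖B.k‖ = 1)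
    (hBl : ‖B.l‖ = 1) (hA : ∀ m, AEStronglyMeasurable (A.entry m) μD)
    (hB : ∀ m, AEStronglyMeasurable (B.entry m) μD) :
    eLpNorm (fun p : ℝ × ℝ => (A.proj - B.proj) ((p.1 : ℍ) + p.2 • A.k)) 2 μD
      ≤ ∑ m, eLpNorm (A.entry m - B.entry m) 2 μD
        + 2 * ENNReal.ofReal (‖A.k - B.k‖ + ‖A.l - B.l‖) * ∑ m, eLpNorm (B.entry m) 2 μD := by
  set ε := ‖A.k - B.k‖ + ‖A.l - B.l‖
  set c : ℍ := (2⁻¹ : ℝ) • (A.k * (B.k - A.k))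
  have hAs := aestronglyMeasurable_slice hA
  have hBs := aestronglyMeasurable_slice hB
  have hBr := hBs.comp_measurePreserving measurePreserving_reflectY
  have hc : 2 * ‖c‖ ≤ ε := by
    rw [norm_smul, norm_mul, hAk.2, one_mul, norm_sub_rev, Real.norm_of_nonneg (by norm_num)]
    linarith [norm_nonneg (A.l - B.l)]
  have hcorr : eLpNorm (c • (B.slice ∘ reflectY - B.slice)) 2 μD
      ≤ ENNReal.ofReal ε * ∑ m, eLpNorm (B.entry m) 2 μD :=
    calc eLpNorm (c • (B.slice ∘ reflectY - B.slice)) 2 μD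
        = ‖c‖ₑ * eLpNorm (B.slice ∘ reflectY - B.slice) 2 μD := eLpNorm_const_smul _ _ _ _
      _ ≤ ‖c‖ₑ * (eLpNorm B.slice 2 μD + eLpNorm B.slice 2 μD) := by
        gcongr
        simpa only [eLpNorm_comp_measurePreserving hBs measurePreserving_reflectY]
          using eLpNorm_sub_le hBr hBs one_le_two
      _ = ENNReal.ofReal (2 * ‖c‖) * eLpNorm B.slice 2 μD := by
        rw [ofReal_mul zero_le_two, ofReal_norm, ofReal_ofNat]
        ring
      _ ≤ ENNReal.ofReal ε * ∑ m, eLpNorm (B.entry m) 2 μD := by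
        gcongr
        exact eLpNorm_slice_le hBk hBl hB
  rw [proj_sub_proj_coe_add_smul hAk]
  calc _ ≤ eLpNorm (A.slice - B.slice) 2 μD + eLpNorm (c • (B.slice ∘ reflectY - B.slice)) 2 μD :=
        eLpNorm_sub_le (hAs.sub hBs) ((hBr.sub hBs).const_smul c) one_le_two
    _ ≤ (∑ m, eLpNorm (A.entry m - B.entry m) 2 μD
          + ENNReal.ofReal ε * ∑ m, eLpNorm (B.entry m) 2 μD)
        + ENNReal.ofReal ε * ∑ m, eLpNorm (B.entry m) 2 μD :=
        add_le_add (eLpNorm_slice_sub_slice_le hAl hAk.2 hBk hA hB) hcorr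
    _ = _ := by ring

lemma bergNormB_proj_sub_proj_le (hA : A.mem) (hB : B.mem) :
    bergNormB A.k (A.proj - B.proj)
      ≤ ∑ m, L2D (A.entry m - B.entry m)
        + 2 * (‖A.k - B.k‖ + ‖A.l - B.l‖) * ∑ m, L2D (B.entry m) := by
  obtain ⟨hAk, hAl, -⟩ := hA.2.2
  obtain ⟨hBk, hBl, -⟩ := hB.2.2
  have hAm := fun m => (hA.memLp_entry m).1
  have hBm := fun m => (hB.memLp_entry m).1
  rw [bergNormB, bergNormSqB,
    sqrt_integral_norm_sq_eq_toReal_eLpNorm (aestronglyMeasurable_proj_sub_proj hAk hAm hBm)]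
  have hX := Finset.sum_nonneg fun m (_ : m ∈ Finset.univ) => L2D_nonneg (A.entry m - B.entry m)
  have hS := Finset.sum_nonneg fun m (_ : m ∈ Finset.univ) => L2D_nonneg (B.entry m)
  have hε : 0 ≤ 2 * (‖A.k - B.k‖ + ‖A.l - B.l‖) := by positivity
  refine toReal_le_of_le_ofReal (by positivity)
    ((eLpNorm_proj_sub_proj_le hAk hAl.2 hBk.2 hBl.2 hAm hBm).trans_eq ?_)
  rw [sum_eLpNorm_eq_ofReal_sum_L2D _ fun m _ => (hA.memLp_entry m).sub (hB.memLp_entry m),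
    sum_eLpNorm_eq_ofReal_sum_L2D _ fun m _ => hB.memLp_entry m,
    ofReal_add hX (mul_nonneg hε hS), ofReal_mul hε, ofReal_mul zero_le_two, ofReal_ofNat]

end HLElem

lemma add_le_two_mul_sqrt_sq_add_sq (x y : ℝ) : x + y ≤ 2 * √(x ^ 2 + y ^ 2) := by
  have hxs : x ≤ √(x ^ 2 + y ^ 2) := Real.le_sqrt_of_sq_le (by nlinarith)
  have hys : y ≤ √(x ^ 2 + y ^ 2) := Real.le_sqrt_of_sq_le (by nlinarith)
  linarith

/-- Lipschitz-type estimate for the bundle projection `P_{𝔹⁴} : HL(D) → A_i(𝔹⁴)`. -/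
theorem proj_lipschitz_estimate (A B : HLElem) (hA : A.mem) (hB : B.mem) :
    bergNormB A.k (A.proj - B.proj)
      ≤ 8 * (1 + L2D B.a + L2D B.b + L2D B.c + L2D B.d) * HLdist A B := by
  have hbound := HLElem.bergNormB_proj_sub_proj_le hA hB
  set X := ∑ m, L2D (A.entry m - B.entry m)
  set S := ∑ m, L2D (B.entry m)
  set δ := √(‖A.k - B.k‖ ^ 2 + ‖A.l - B.l‖ ^ 2)
  have hX : 0 ≤ X := Finset.sum_nonneg fun _ _ => L2D_nonneg _
  have hS : 0 ≤ S := Finset.sum_nonneg fun _ _ => L2D_nonneg _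
  have hdist : HLdist A B = X + δ := by
    simp only [HLdist, X, δ, HLElem.entry, Fin.sum_univ_four, Matrix.cons_val]
  have hS' : 1 + L2D B.a + L2D B.b + L2D B.c + L2D B.d = 1 + S := by
    simp only [S, HLElem.entry, Fin.sum_univ_four, Matrix.cons_val, add_assoc]
  have hε : ‖A.k - B.k‖ + ‖A.l - B.l‖ ≤ 2 * δ := add_le_two_mul_sqrt_sq_add_sq _ _
  have hδ : 0 ≤ δ := Real.sqrt_nonneg _
  rw [hdist, hS']
  nlinarith
end
end
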